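/- arXiv:1111.2730 — 4 statements merged into one kernel-verified Lean document; each statement's English description precedes it below -/
import Mathlib

section
/- Let U ⊆ ℝ^m be a nonempty polyhedral set, M ∈ ℝ^{m×m} symmetric positive semidefinite, B ∈ ℝ^{m×n} injective, b ∈ ℝ^m, and define ρ : ℝ^n → ℝ ∪ {+∞} by ρ(y) = θ_{U,M}(b + B y). If ρ is coercive, then there exist constants β > 0 and N > 0 such that ρ(y) ≥ β‖y‖ for every y ∈ dom(ρ) with ‖y‖ ≥ N. -/
open Matrix Set MeasureTheory
open scoped RealInnerProductSpace

noncomputable section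

/-- `E d` is Euclidean space `ℝ^d`. -/
abbrev E (d : ℕ) := EuclideanSpace ℝ (Fin d)

/-- Matrix-vector multiplication as a map between Euclidean spaces. -/
def mulVecE {m n : ℕ} (B : Matrix (Fin m) (Fin n) ℝ) (y : E n) : E m :=
  Matrix.toEuclideanLin B y

/-- The polar of a set `K`: `K° = {v | ⟪v, w⟫ ≤ 0 for all w ∈ K}`. -/
def polarCone {d : ℕ} (K : Set (E d)) : Set (E d) :=
  {v | ∀ w ∈ K, ⟪v, w⟫ ≤ 0}

/-- The horizon cone of `C`: directions `x` with `w + τ • x ∈ C` for all `w ∈ C`, `τ ≥ 0`. -/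
def horizonCone {d : ℕ} (C : Set (E d)) : Set (E d) :=
  {x | ∀ w ∈ C, ∀ τ : ℝ, 0 ≤ τ → w + τ • x ∈ C}

/-- The null space of a matrix `M`, as a set of vectors. -/
def nullSet {d : ℕ} (M : Matrix (Fin d) (Fin d) ℝ) : Set (E d) :=
  {w | mulVecE M w = 0}

/-- A set is polyhedral if it is of the form `{u | Aᵀ u ≤ a}` (componentwise). -/
def IsPolyhedral {d : ℕ} (U : Set (E d)) : Prop :=
  ∃ (k : ℕ) (A : Matrix (Fin d) (Fin k) ℝ) (a : Fin k → ℝ),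
    U = {u | ∀ i, mulVecE Aᵀ u i ≤ a i}

/-- The piecewise linear-quadratic penalty
`θ_{U,M}(w) = sup_{u ∈ U} (⟪u, w⟫ - (1/2) ⟪u, M u⟫)`, valued in `ℝ ∪ {±∞}`. -/
def theta {m : ℕ} (U : Set (E m)) (M : Matrix (Fin m) (Fin m) ℝ) (w : E m) : EReal :=
  ⨆ u ∈ U, ((⟪u, w⟫ - (1 / 2) * ⟪u, mulVecE M u⟫ : ℝ) : EReal)

/-- `cone U = {t • u | u ∈ U, t ≥ 0}`. -/
def coneOf {d : ℕ} (U : Set (E d)) : Set (E d) :=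
  {w | ∃ u ∈ U, ∃ t : ℝ, 0 ≤ t ∧ w = t • u}

/-- A function `ρ : ℝ^n → ℝ ∪ {+∞}` is coercive if `ρ(y) → +∞` as `‖y‖ → ∞`. -/
def Coercive {n : ℕ} (ρ : E n → EReal) : Prop :=
  ∀ C : ℝ, ∃ R : ℝ, ∀ y : E n, R ≤ ‖y‖ → (C : EReal) ≤ ρ y

/-! Moving from a point `y₀` of the domain towards a far point `y`, convexity bounds the value at
distance `c` from `y₀` by the convex combination of `f y₀` and `f y` with weight `c / ‖y - y₀‖` on
`f y`; coercivity pushes that value above `f y₀ + 1`, so `f y ≥ f y₀ + ‖y - y₀‖ / c`. The penalty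
`θ_{U,M}` is a supremum of affine functions of `w`, so `ρ` is convex on its (convex) domain. -/

section LinearGrowth

variable {X : Type*} [NormedAddCommGroup X] [NormedSpace ℝ X] {D : Set X} {f : X → ℝ}

theorem ConvexOn.add_norm_sub_div_le {y₀ : X} {c : ℝ} (hf : ConvexOn ℝ D f) (hy₀ : y₀ ∈ D)
    (hc : 0 < c) (hsphere : ∀ z ∈ D, ‖z - y₀‖ = c → f y₀ + 1 ≤ f z) :
    ∀ y ∈ D, c ≤ ‖y - y₀‖ → f y₀ + ‖y - y₀‖ / c ≤ f y := by
  intro y hy hcy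
  set d := ‖y - y₀‖
  have hd : 0 < d := hc.trans_le hcy
  set t := c / d
  have ht0 : 0 < t := div_pos hc hd
  have ht1 : t ≤ 1 := (div_le_one hd).2 hcy
  have htd : t * d = c := div_mul_cancel₀ c hd.ne'
  have hzD : (1 - t) • y₀ + t • y ∈ D := hf.1 hy₀ hy (by linarith) ht0.le (by ring)
  have hz : ‖(1 - t) • y₀ + t • y - y₀‖ = c := by
    rw [show (1 - t) • y₀ + t • y - y₀ = t • (y - y₀) by module, norm_smul,
      Real.norm_of_nonneg ht0.le, htd]
  have hkey : f y₀ + 1 ≤ (1 - t) * f y₀ + t * f y :=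
    (hsphere _ hzD hz).trans (hf.2 hy₀ hy (by linarith) ht0.le (by ring))
  rw [← htd, div_mul_cancel_right₀ hd.ne']
  nlinarith [inv_nonneg.2 ht0.le, inv_mul_cancel₀ ht0.ne']

theorem ConvexOn.exists_linear_lower_bound (hf : ConvexOn ℝ D f)
    (hcoer : ∀ C : ℝ, ∃ R : ℝ, ∀ y ∈ D, R ≤ ‖y‖ → C ≤ f y) :
    ∃ β : ℝ, 0 < β ∧ ∃ N : ℝ, 0 < N ∧ ∀ y ∈ D, N ≤ ‖y‖ → β * ‖y‖ ≤ f y := by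
  rcases D.eq_empty_or_nonempty with rfl | ⟨y₀, hy₀⟩
  · exact ⟨1, one_pos, 1, one_pos, fun y hy => hy.elim⟩
  obtain ⟨R, hR⟩ := hcoer (f y₀ + 1)
  set c := |R| + ‖y₀‖ + 1
  have hc : 0 < c := by positivity
  have hgrowth := hf.add_norm_sub_div_le hy₀ hc fun z hz hzc =>
    hR z hz (by linarith [le_abs_self R, norm_sub_le z y₀])
  refine ⟨1 / (2 * c), by positivity, max (‖y₀‖ + c) (2 * ‖y₀‖ - 2 * c * f y₀), by positivity, ?_⟩
  intro y hy hyN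
  have hnear : ‖y₀‖ + c ≤ ‖y‖ := (le_max_left _ _).trans hyN
  have hfar : 2 * ‖y₀‖ - 2 * c * f y₀ ≤ ‖y‖ := (le_max_right _ _).trans hyN
  have hdist : ‖y‖ - ‖y₀‖ ≤ ‖y - y₀‖ := norm_sub_norm_le y y₀
  calc 1 / (2 * c) * ‖y‖ ≤ f y₀ + (‖y‖ - ‖y₀‖) / c := by
        rw [one_div_mul_eq_div, div_le_iff₀ (by positivity), add_mul, div_mul_eq_mul_div,
          mul_div_assoc, mul_div_cancel_right₀ _ hc.ne']
        linarith
    _ ≤ f y₀ + ‖y - y₀‖ / c := by gcongr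
    _ ≤ f y := hgrowth y hy (by linarith)

end LinearGrowth

section Theta

variable {m : ℕ} {U : Set (E m)} {M : Matrix (Fin m) (Fin m) ℝ}

theorem theta_le_coe_iff {w : E m} {r : ℝ} :
    theta U M w ≤ r ↔ ∀ u ∈ U, ⟪u, w⟫ - (1 / 2) * ⟪u, mulVecE M u⟫ ≤ r := by
  simp only [theta, iSup₂_le_iff, EReal.coe_le_coe_iff]

theorem theta_ne_bot (hU : U.Nonempty) (w : E m) : theta U M w ≠ ⊥ := by
  obtain ⟨u, hu⟩ := hU
  exact ne_bot_of_le_ne_bot (EReal.coe_ne_bot _)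
    (le_iSup₂ (f := fun u (_ : u ∈ U) => ((⟪u, w⟫ - (1 / 2) * ⟪u, mulVecE M u⟫ : ℝ) : EReal)) u hu)

theorem coe_toReal_theta (hU : U.Nonempty) {w : E m} (hw : theta U M w < ⊤) :
    ((theta U M w).toReal : EReal) = theta U M w :=
  EReal.coe_toReal hw.ne (theta_ne_bot hU w)

theorem theta_smul_add_smul_le {w w' : E m} {r r' a b : ℝ} (ha : 0 ≤ a) (hb : 0 ≤ b)
    (hab : a + b = 1) (hw : theta U M w ≤ r) (hw' : theta U M w' ≤ r') :
    theta U M (a • w + b • w') ≤ ((a * r + b * r' : ℝ) : EReal) := by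
  rw [theta_le_coe_iff] at hw hw' ⊢
  intro u hu
  have hq := mul_le_mul_of_nonneg_left (hw u hu) ha
  have hq' := mul_le_mul_of_nonneg_left (hw' u hu) hb
  rw [inner_add_right, inner_smul_right, inner_smul_right]
  linear_combination hq + hq' + (1 / 2) * ⟪u, mulVecE M u⟫ * hab

theorem convexOn_toReal_theta (hU : U.Nonempty) :
    ConvexOn ℝ {w | theta U M w < ⊤} (fun w => (theta U M w).toReal) := by
  have hbound : ∀ ⦃w⦄, theta U M w < ⊤ → ∀ ⦃w'⦄, theta U M w' < ⊤ → ∀ ⦃a b : ℝ⦄, 0 ≤ a →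
      0 ≤ b → a + b = 1 → theta U M (a • w + b • w') ≤
        ((a * (theta U M w).toReal + b * (theta U M w').toReal : ℝ) : EReal) :=
    fun w hw w' hw' a b ha hb hab => theta_smul_add_smul_le ha hb hab
      (coe_toReal_theta hU hw).ge (coe_toReal_theta hU hw').ge
  refine ⟨fun w hw w' hw' a b ha hb hab => (hbound hw hw' ha hb hab).trans_lt (EReal.coe_lt_top _),
    fun w hw w' hw' a b ha hb hab => ?_⟩
  have h := hbound hw hw' ha hb hab
  rwa [← coe_toReal_theta hU (h.trans_lt (EReal.coe_lt_top _)), EReal.coe_le_coe_iff] at h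

end Theta

theorem coercive_linear_growth_general {m n : ℕ}
    (U : Set (E m)) (hUne : U.Nonempty)
    (M : Matrix (Fin m) (Fin m) ℝ)
    (B : Matrix (Fin m) (Fin n) ℝ)
    (b : E m)
    (ρ : E n → EReal) (hρ : ∀ y, ρ y = theta U M (b + mulVecE B y))
    (hcoer : Coercive ρ) :
    ∃ β : ℝ, 0 < β ∧ ∃ N : ℝ, 0 < N ∧
      ∀ y : E n, ρ y < ⊤ → N ≤ ‖y‖ → ((β * ‖y‖ : ℝ) : EReal) ≤ ρ y := by
  have hcoe : ∀ y, ρ y < ⊤ → ρ y = ((ρ y).toReal : EReal) := fun y hy => by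
    rw [hρ] at hy ⊢
    exact (coe_toReal_theta hUne hy).symm
  have hconv : ConvexOn ℝ {y | ρ y < ⊤} (fun y => (ρ y).toReal) := by
    simp_rw [hρ]
    exact ((convexOn_toReal_theta hUne).translate_right b).comp_linearMap (toEuclideanLin B)
  obtain ⟨β, hβ, N, hN, hgrowth⟩ := hconv.exists_linear_lower_bound fun C =>
    (hcoer C).imp fun R hR y hy hRy => by
      have h := hR y hRy
      rwa [hcoe y hy, EReal.coe_le_coe_iff] at h
  refine ⟨β, hβ, N, hN, fun y hy hNy => ?_⟩
  rw [hcoe y hy, EReal.coe_le_coe_iff]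
  exact hgrowth y hy hNy

/-- if rho(y) = theta_{U,M}(b + B y) is coercive, then rho grows at least
linearly: there are beta > 0 and N > 0 with rho(y) ≥ beta * ‖y‖ for all y in dom rho
with ‖y‖ ≥ N. -/
theorem coercive_linear_growth {m n : ℕ}
    (U : Set (E m)) (hUne : U.Nonempty) (hUpoly : IsPolyhedral U)
    (M : Matrix (Fin m) (Fin m) ℝ) (hM : M.PosSemidef)
    (B : Matrix (Fin m) (Fin n) ℝ) (hB : Function.Injective (mulVecE B))
    (b : E m)
    (ρ : E n → EReal) (hρ : ∀ y, ρ y = theta U M (b + mulVecE B y))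
    (hcoer : Coercive ρ) :
    ∃ β : ℝ, 0 < β ∧ ∃ N : ℝ, 0 < N ∧
      ∀ y : E n, ρ y < ⊤ → N ≤ ‖y‖ → ((β * ‖y‖ : ℝ) : EReal) ≤ ρ y :=
  coercive_linear_growth_general U hUne M B b ρ hρ hcoer
end
end

section
/- Let U ⊆ ℝ^m be a nonempty polyhedral set, M ∈ ℝ^{m×m} symmetric positive semidefinite, B ∈ ℝ^{m×n} injective, b ∈ ℝ^m, and define ρ : ℝ^n → ℝ ∪ {+∞} by ρ(y) = θ_{U,M}(b + B y). Suppose ρ is coercive, and let k be the dimension of aff(dom(ρ)). Then for every affine isometric map φ : ℝ^k → ℝ^n whose image is aff(dom(ρ)), the function x ↦ exp(−ρ(φ(x))) (with the convention exp(−∞) = 0) is integrable on ℝ^k with respect to k-dimensional Lebesgue measure. -/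
open Matrix Set MeasureTheory
open scoped RealInnerProductSpace

noncomputable section

/-- auxiliary value function -/
def pv {m n : ℕ} (M : Matrix (Fin m) (Fin m) ℝ) (B : Matrix (Fin m) (Fin n) ℝ)
    (b : E m) (u : E m) (y : E n) : ℝ :=
  ⟪u, b + mulVecE B y⟫ - (1 / 2) * ⟪u, mulVecE M u⟫

lemma pv_le_theta {m n : ℕ} {U : Set (E m)} {M : Matrix (Fin m) (Fin m) ℝ}
    {B : Matrix (Fin m) (Fin n) ℝ} {b : E m} {u : E m} (hu : u ∈ U) (y : E n) :
    ((pv M B b u y : ℝ) : EReal) ≤ theta U M (b + mulVecE B y) :=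
  le_iSup₂ (f := fun u (_ : u ∈ U) =>
    ((⟪u, b + mulVecE B y⟫ - (1 / 2) * ⟪u, mulVecE M u⟫ : ℝ) : EReal)) u hu

lemma theta_le_pv {m n : ℕ} {U : Set (E m)} {M : Matrix (Fin m) (Fin m) ℝ}
    {B : Matrix (Fin m) (Fin n) ℝ} {b : E m} {r : ℝ} (y : E n)
    (h : ∀ u ∈ U, pv M B b u y ≤ r) :
    theta U M (b + mulVecE B y) ≤ (r : EReal) :=
  iSup₂_le fun u hu => EReal.coe_le_coe_iff.mpr (h u hu)

lemma aux_integrable_exp_neg {d : ℕ} {a : ℝ} (ha : 0 < a) :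
    Integrable (fun x : E d => Real.exp (-(a * ‖x‖))) (volume : Measure (E d)) := by
  have hnr : (Module.finrank ℝ (E d) : ℝ) < ((d : ℝ) + 1) := by
    rw [finrank_euclideanSpace_fin]; linarith
  set C : ℝ := (d + 1).factorial * Real.exp a / a ^ (d + 1) with hC
  refine ((integrable_one_add_norm (E := E d) (μ := volume) hnr).const_mul C).mono'
    (Continuous.aestronglyMeasurable (by fun_prop))
    (Filter.Eventually.of_forall fun x => ?_)
  have ht : (0:ℝ) ≤ ‖x‖ := norm_nonneg x
  set t : ℝ := ‖x‖
  have h1t : (0:ℝ) < 1 + t := by linarith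
  have hrpow : (1 + t) ^ (-((d : ℝ) + 1)) = ((1 + t) ^ (d + 1 : ℕ))⁻¹ := by
    rw [← Real.rpow_natCast (1 + t) (d + 1), ← Real.rpow_neg h1t.le]
    push_cast; ring_nf
  rw [Real.norm_eq_abs, abs_of_pos (Real.exp_pos _), hrpow]
  rw [← div_eq_mul_inv, le_div_iff₀ (by positivity)]
  have h1 : (a * (1 + t)) ^ (d + 1) ≤ (d + 1).factorial * Real.exp (a * (1 + t)) := by
    have := Real.pow_div_factorial_le_exp (x := a * (1 + t)) (by positivity) (d + 1)
    rw [div_le_iff₀ (by positivity)] at this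
    linarith [this]
  have h2 : Real.exp (a * (1 + t)) = Real.exp a * Real.exp (a * t) := by
    rw [← Real.exp_add]; ring_nf
  have h3 : Real.exp (-(a * t)) * Real.exp (a * t) = 1 := by
    rw [← Real.exp_add]; simp
  rw [mul_pow] at h1
  rw [le_div_iff₀ (by positivity)]
  have h4 := mul_le_mul_of_nonneg_left h1 (Real.exp_pos (-(a * t))).le
  rw [h2] at h4
  calc Real.exp (-(a * t)) * (1 + t) ^ (d + 1) * a ^ (d + 1)
      = Real.exp (-(a * t)) * (a ^ (d + 1) * (1 + t) ^ (d + 1)) := by ring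
    _ ≤ Real.exp (-(a * t)) * ((d + 1).factorial * (Real.exp a * Real.exp (a * t))) := h4
    _ = (d + 1).factorial * Real.exp a * (Real.exp (-(a * t)) * Real.exp (a * t)) := by ring
    _ = (d + 1).factorial * Real.exp a := by rw [h3, mul_one]


set_option maxHeartbeats 1000000 in
/-- PLQ integrability: if rho(y) = theta_{U,M}(b + B y) is coercive, then
exp(-rho) (with exp(-infty) = 0) is integrable on aff (dom rho) with respect to the
Lebesgue measure of dimension k = dim aff (dom rho), pulled back by any affine
isometry of ℝ^k onto aff (dom rho). -/
theorem plq_integrability {m n : ℕ}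
    (U : Set (E m)) (hUne : U.Nonempty) (hUpoly : IsPolyhedral U)
    (M : Matrix (Fin m) (Fin m) ℝ) (hM : M.PosSemidef)
    (B : Matrix (Fin m) (Fin n) ℝ) (hB : Function.Injective (mulVecE B))
    (b : E m)
    (ρ : E n → EReal) (hρ : ∀ y, ρ y = theta U M (b + mulVecE B y))
    (hcoer : Coercive ρ)
    (k : ℕ) (hk : k = Module.finrank ℝ (affineSpan ℝ {y | ρ y < ⊤}).direction)
    (φ : E k →ᵃ[ℝ] E n) (hφiso : Isometry φ)
    (hφrange : Set.range φ = (affineSpan ℝ {y | ρ y < ⊤} : Set (E n))) :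
    Integrable
      (fun x : E k => if ρ (φ x) = ⊤ then 0 else Real.exp (-(ρ (φ x)).toReal))
      (volume : Measure (E k)) := by
  classical
  obtain ⟨u₀, hu₀⟩ := hUne
  have t1 : ∀ u ∈ U, ∀ y : E n, ((pv M B b u y : ℝ) : EReal) ≤ ρ y := by
    intro u hu y; rw [hρ y]; exact pv_le_theta hu y
  have t2 : ∀ (y : E n) (r : ℝ), (∀ u ∈ U, pv M B b u y ≤ r) → ρ y ≤ (r : EReal) := by
    intro y r h; rw [hρ y]; exact theta_le_pv y h
  have tbot : ∀ y, ρ y ≠ ⊥ := fun y =>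
    (lt_of_lt_of_le (EReal.bot_lt_coe _) (t1 u₀ hu₀ y)).ne'
  -- the domain is nonempty
  have hdom : {y : E n | ρ y < ⊤}.Nonempty := by
    by_contra h
    rw [Set.not_nonempty_iff_eq_empty] at h
    have hre : Set.range φ = ∅ := by
      rw [hφrange, h, AffineSubspace.span_empty, AffineSubspace.bot_coe]
    have h0 : φ 0 ∈ Set.range φ := ⟨0, rfl⟩
    rw [hre] at h0
    exact h0
  obtain ⟨y₀, hy₀⟩ := hdom
  have hy₀' : y₀ ∈ Set.range φ := by
    rw [hφrange]; exact subset_affineSpan ℝ _ hy₀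
  obtain ⟨x₀, hx₀⟩ := hy₀'
  have hx₀top : ρ (φ x₀) ≠ ⊤ := by rw [hx₀]; exact hy₀.ne
  set r₀ : ℝ := (ρ (φ x₀)).toReal with hr₀
  have hx₀eq : ρ (φ x₀) = (r₀ : EReal) := (EReal.coe_toReal hx₀top (tbot _)).symm
  -- coercivity along φ
  obtain ⟨R, hR⟩ := hcoer (r₀ + 1)
  set R' : ℝ := max (R + ‖φ 0‖) 0 with hR'def
  have hR'0 : 0 ≤ R' := le_max_right _ _
  have hcoer' : ∀ x : E k, R' ≤ ‖x‖ → ((r₀ + 1 : ℝ) : EReal) ≤ ρ (φ x) := by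
    intro x hx
    apply hR
    have hd : dist (φ x) (φ 0) = ‖x‖ := by rw [hφiso.dist_eq, dist_zero_right]
    have h2 := dist_le_norm_add_norm (φ x) (φ 0)
    rw [hd] at h2
    have hxR : R + ‖φ 0‖ ≤ ‖x‖ := le_trans (le_max_left _ _) hx
    linarith
  set S : ℝ := R' + ‖x₀‖ + 1 with hSdef
  have hSpos : 0 < S := by have := norm_nonneg x₀; rw [hSdef]; linarith
  -- convexity inequality
  have convineq : ∀ (x : E k) (t : ℝ), 0 ≤ t → t ≤ 1 → ∀ rx : ℝ,
      ρ (φ x) ≤ (rx : EReal) →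
      ρ (φ (x₀ + t • (x - x₀))) ≤ (((1 - t) * r₀ + t * rx : ℝ) : EReal) := by
    intro x t ht0 ht1 rx hrx
    apply t2
    intro u hu
    have hv₀ : pv M B b u (φ x₀) ≤ r₀ := by
      have h := (t1 u hu (φ x₀)).trans_eq hx₀eq
      exact_mod_cast h
    have hvx : pv M B b u (φ x) ≤ rx := by
      have h := (t1 u hu (φ x)).trans hrx
      exact_mod_cast h
    have hφz : φ (x₀ + t • (x - x₀)) = φ x₀ + t • (φ x - φ x₀) := by
      have h1 : φ (t • (x - x₀) +ᵥ x₀) = φ.linear (t • (x - x₀)) +ᵥ φ x₀ := φ.map_vadd _ _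
      simp only [vadd_eq_add, _root_.map_smul] at h1
      rw [show φ.linear (x - x₀) = φ x - φ x₀ from φ.linearMap_vsub x x₀] at h1
      calc φ (x₀ + t • (x - x₀)) = φ (t • (x - x₀) + x₀) := by rw [add_comm]
        _ = t • (φ x - φ x₀) + φ x₀ := h1
        _ = φ x₀ + t • (φ x - φ x₀) := by rw [add_comm]
    have hlin : pv M B b u (φ (x₀ + t • (x - x₀)))
        = (1 - t) * pv M B b u (φ x₀) + t * pv M B b u (φ x) := by
      rw [hφz]
      simp only [pv, mulVecE, map_add, _root_.map_smul, map_sub, inner_add_right, inner_sub_right,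
        real_inner_smul_right]
      ring
    rw [hlin]
    have h5 := add_le_add (mul_le_mul_of_nonneg_left hv₀ (by linarith : (0:ℝ) ≤ 1 - t))
      (mul_le_mul_of_nonneg_left hvx ht0)
    linarith
  -- decay estimate far away
  have key : ∀ x : E k, S ≤ ‖x - x₀‖ → ρ (φ x) ≠ ⊤ →
      r₀ + ‖x - x₀‖ / S ≤ (ρ (φ x)).toReal := by
    intro x hxS hxtop
    set rx := (ρ (φ x)).toReal with hrxdef
    have hρx : ρ (φ x) = (rx : EReal) := (EReal.coe_toReal hxtop (tbot _)).symm
    have hdpos : 0 < ‖x - x₀‖ := lt_of_lt_of_le hSpos hxS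
    set t : ℝ := S / ‖x - x₀‖ with htdef
    have ht0 : 0 < t := div_pos hSpos hdpos
    have ht1 : t ≤ 1 := (div_le_one hdpos).mpr hxS
    have hz := convineq x t ht0.le ht1 rx hρx.le
    have hznorm : ‖(x₀ + t • (x - x₀)) - x₀‖ = S := by
      rw [add_sub_cancel_left, norm_smul, Real.norm_eq_abs, abs_of_pos ht0, htdef]
      field_simp
    have hzR : R' ≤ ‖x₀ + t • (x - x₀)‖ := by
      have h6 := norm_sub_le (x₀ + t • (x - x₀)) x₀
      rw [hznorm] at h6
      have := norm_nonneg x₀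
      rw [hSdef] at h6
      linarith
    have hge := hcoer' _ hzR
    have hcomb : (r₀ + 1 : ℝ) ≤ (1 - t) * r₀ + t * rx := by
      have h7 := hge.trans hz
      exact_mod_cast h7
    have h1t : 1 ≤ t * (rx - r₀) := by nlinarith
    have h8 : 1 / t ≤ rx - r₀ := by
      rw [div_le_iff₀ ht0]
      nlinarith
    have hinv : 1 / t = ‖x - x₀‖ / S := by rw [htdef, one_div_div]
    rw [hinv] at h8
    linarith
  -- global lower bound on ρ∘φ
  set T := LinearMap.toContinuousLinearMap (Matrix.toEuclideanLin B) with hTdef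
  set c₀ : ℝ := (1 / 2) * ⟪u₀, mulVecE M u₀⟫ with hc₀
  have hTv : ∀ v : E n, ‖mulVecE B v‖ ≤ ‖T‖ * ‖v‖ := fun v => T.le_opNorm v
  have hφnorm : ∀ x : E k, ‖φ x‖ ≤ ‖φ 0‖ + ‖x‖ := by
    intro x
    have hd : dist (φ x) (φ 0) = ‖x‖ := by rw [hφiso.dist_eq, dist_zero_right]
    have h2 := dist_le_norm_add_norm (φ x) (φ 0)
    have h3 := abs_norm_sub_norm_le (φ x) (φ 0)
    rw [dist_eq_norm] at hd
    have := norm_sub_norm_le (φ x) (φ 0)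
    linarith [hd ▸ this]
  have lower : ∀ x : E k, ρ (φ x) ≠ ⊤ →
      -(‖u₀‖ * (‖b‖ + ‖T‖ * (‖φ 0‖ + ‖x‖)) + |c₀|) ≤ (ρ (φ x)).toReal := by
    intro x hx
    have h1 : ((pv M B b u₀ (φ x) : ℝ) : EReal) ≤ ρ (φ x) := t1 u₀ hu₀ (φ x)
    have h2 : pv M B b u₀ (φ x) ≤ (ρ (φ x)).toReal := by
      have h := h1.trans_eq (EReal.coe_toReal hx (tbot _)).symm
      exact_mod_cast h
    refine le_trans ?_ h2
    have hw : ‖b + mulVecE B (φ x)‖ ≤ ‖b‖ + ‖T‖ * (‖φ 0‖ + ‖x‖) := by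
      have h4 := hTv (φ x)
      have h5 := mul_le_mul_of_nonneg_left (hφnorm x) (norm_nonneg T)
      calc ‖b + mulVecE B (φ x)‖ ≤ ‖b‖ + ‖mulVecE B (φ x)‖ := norm_add_le _ _
        _ ≤ ‖b‖ + ‖T‖ * (‖φ 0‖ + ‖x‖) := by linarith
    have hip : |⟪u₀, b + mulVecE B (φ x)⟫| ≤ ‖u₀‖ * ‖b + mulVecE B (φ x)‖ :=
      abs_real_inner_le_norm _ _
    have h6 := mul_le_mul_of_nonneg_left hw (norm_nonneg u₀)
    have h7 := neg_abs_le ⟪u₀, b + mulVecE B (φ x)⟫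
    have h8 := le_abs_self c₀
    simp only [pv, ← hc₀]
    linarith
  -- measurability
  have hg_lsc : LowerSemicontinuous (fun x : E k => ρ (φ x)) := by
    have heq : (fun x : E k => ρ (φ x)) = fun x =>
        ⨆ u ∈ U, ((⟪u, b + mulVecE B (φ x)⟫ - (1 / 2) * ⟪u, mulVecE M u⟫ : ℝ) : EReal) := by
      funext x; rw [hρ]; rfl
    rw [heq]
    apply lowerSemicontinuous_biSup
    intro u hu
    apply Continuous.lowerSemicontinuous
    apply continuous_coe_real_ereal.comp
    have hc1 : Continuous fun x : E k => b + mulVecE B (φ x) :=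
      continuous_const.add
        (((Matrix.toEuclideanLin B).continuous_of_finiteDimensional).comp hφiso.continuous)
    exact (continuous_const.inner hc1).sub continuous_const
  have hg_meas : Measurable (fun x : E k => ρ (φ x)) := hg_lsc.measurable
  have hf_meas : Measurable (fun x : E k =>
      if ρ (φ x) = ⊤ then 0 else Real.exp (-(ρ (φ x)).toReal)) := by
    apply Measurable.ite
    · exact hg_meas (measurableSet_singleton ⊤)
    · exact measurable_const
    · exact Real.measurable_exp.comp ((measurable_ereal_toReal.comp hg_meas).neg)
  -- assembling the dominating function
  set a2 : ℝ := ‖u₀‖ * (‖b‖ + ‖T‖ * (‖φ 0‖ + (‖x₀‖ + S))) + |c₀| with ha2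
  set Cmax : ℝ := max (Real.exp (-r₀ + ‖x₀‖ / S)) (Real.exp (a2 + (‖x₀‖ + S) / S)) with hCm
  have hα : (0:ℝ) < S⁻¹ := inv_pos.mpr hSpos
  refine ((aux_integrable_exp_neg (d := k) hα).const_mul Cmax).mono'
    hf_meas.aestronglyMeasurable (Filter.Eventually.of_forall fun x => ?_)
  by_cases htop : ρ (φ x) = ⊤
  · simp only [htop, if_pos, norm_zero]
    positivity
  · rw [if_neg htop, Real.norm_eq_abs, abs_of_pos (Real.exp_pos _)]
    by_cases hfar : S ≤ ‖x - x₀‖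
    · have hkey := key x hfar htop
      have hnn : ‖x‖ - ‖x₀‖ ≤ ‖x - x₀‖ := norm_sub_norm_le x x₀
      have hdivle : (‖x‖ - ‖x₀‖) / S ≤ ‖x - x₀‖ / S := by gcongr
      have hsplit : (‖x‖ - ‖x₀‖) / S = ‖x‖ / S - ‖x₀‖ / S := sub_div _ _ _
      have hinvdiv : S⁻¹ * ‖x‖ = ‖x‖ / S := (div_eq_inv_mul _ _).symm
      have harg : -(ρ (φ x)).toReal ≤ (-r₀ + ‖x₀‖ / S) + (-(S⁻¹ * ‖x‖)) := by
        rw [hinvdiv]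
        linarith
      calc Real.exp (-(ρ (φ x)).toReal)
          ≤ Real.exp ((-r₀ + ‖x₀‖ / S) + (-(S⁻¹ * ‖x‖))) := Real.exp_le_exp.mpr harg
        _ = Real.exp (-r₀ + ‖x₀‖ / S) * Real.exp (-(S⁻¹ * ‖x‖)) := Real.exp_add _ _
        _ ≤ Cmax * Real.exp (-(S⁻¹ * ‖x‖)) :=
            mul_le_mul_of_nonneg_right (le_max_left _ _) (Real.exp_pos _).le
    · push_neg at hfar
      have hxle : ‖x‖ ≤ ‖x₀‖ + S := by
        have := norm_sub_norm_le x x₀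
        linarith
      have hlow := lower x htop
      have hmono : ‖u₀‖ * (‖b‖ + ‖T‖ * (‖φ 0‖ + ‖x‖)) + |c₀| ≤ a2 := by
        rw [ha2]
        gcongr
      have h1 : -(ρ (φ x)).toReal ≤ a2 := by linarith
      have h2 : Real.exp (-(ρ (φ x)).toReal)
          ≤ Real.exp (a2 + (‖x₀‖ + S) / S) * Real.exp (-(S⁻¹ * ‖x‖)) := by
        rw [← Real.exp_add]
        apply Real.exp_le_exp.mpr
        have h3 : S⁻¹ * ‖x‖ ≤ (‖x₀‖ + S) / S := by
          rw [inv_mul_eq_div]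
          gcongr
        linarith
      exact h2.trans (mul_le_mul_of_nonneg_right (le_max_right _ _) (Real.exp_pos _).le)
end
end

section
/- Let U ⊆ ℝ^m be a nonempty polyhedral set, M ∈ ℝ^{m×m} symmetric positive semidefinite, B ∈ ℝ^{m×n} injective, b ∈ ℝ^m, and define ρ : ℝ^n → ℝ ∪ {+∞} by ρ(y) = θ_{U,M}(b + B y). Suppose ρ is coercive, and let k be the dimension of aff(dom(ρ)). Then for every affine isometric map φ : ℝ^k → ℝ^n whose image is aff(dom(ρ)) and every nonnegative integer p, the function x ↦ ‖x‖^p · exp(−ρ(φ(x))) (with the convention exp(−∞) = 0) is integrable on ℝ^k with respect to k-dimensional Lebesgue measure; i.e., the PLQ density has moments of all orders. -/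
open Matrix Set MeasureTheory
open scoped RealInnerProductSpace

noncomputable section

/-!
Each term `⟪u, b + B y⟫ - ½ ⟪u, M u⟫` of the supremum defining the penalty is affine in `y`, so
`ψ := ρ ∘ φ` is a supremum of continuous affine functions: it is lower semicontinuous, has a
convex epigraph, and is bounded below near any point by a single affine minorant. Convexity turns
coercivity into linear growth: if `ψ x₀ ≤ a` and `ψ ≥ a + 1` on the sphere of radius `R` about
`x₀`, then along the segment from `x₀` to `x` the slope is at least `1 / R`, so
`ψ x ≥ a + ‖x - x₀‖ / R` outside the ball. Hence `exp (-ψ x) ≤ exp (β - α ‖x‖)` with `α > 0`, and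
`‖x‖ ^ p * exp (-ψ x)` is dominated by a multiple of the integrable `(1 + ‖x‖) ^ (-(k + 1))`.
-/

theorem pow_le_factorial_div_pow_mul_exp (q : ℕ) {α s : ℝ} (hα : 0 < α) (hs : 0 ≤ s) :
    s ^ q ≤ q.factorial / α ^ q * Real.exp (α * s) := by
  have h := Real.pow_div_factorial_le_exp (x := α * s) (mul_nonneg hα.le hs) q
  rw [mul_pow, div_le_iff₀ (by positivity)] at h
  rw [div_mul_eq_mul_div, le_div_iff₀ (by positivity)]
  linarith

theorem integrable_norm_pow_mul_of_norm_le_exp {F : Type*} [NormedAddCommGroup F]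
    [NormedSpace ℝ F] [MeasurableSpace F] [BorelSpace F] [FiniteDimensional ℝ F]
    (μ : Measure F) [μ.IsAddHaarMeasure] (p : ℕ) {α β : ℝ} (hα : 0 < α) {g : F → ℝ}
    (hg : AEStronglyMeasurable g μ) (hle : ∀ x, ‖g x‖ ≤ Real.exp (β - α * ‖x‖)) :
    Integrable (fun x => ‖x‖ ^ p * g x) μ := by
  set N := Module.finrank ℝ F
  set q := p + (N + 1)
  set C := Real.exp β * (q.factorial / α ^ q * Real.exp α)
  have hdom : Integrable (fun x : F => C * (1 + ‖x‖) ^ (-((N : ℝ) + 1))) μ :=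
    (integrable_one_add_norm (by linarith)).const_mul C
  refine hdom.mono' ((continuous_norm.pow p).aestronglyMeasurable.mul hg)
    (ae_of_all _ fun x => ?_)
  set t := ‖x‖
  have h1t : 0 < 1 + t := by positivity
  have hexp : Real.exp (α * (1 + t)) * Real.exp (β - α * t) = Real.exp β * Real.exp α := by
    rw [← Real.exp_add, ← Real.exp_add]; ring_nf
  rw [show -((N : ℝ) + 1) = -((N + 1 : ℕ) : ℝ) by push_cast; ring, Real.rpow_neg h1t.le,
    Real.rpow_natCast, ← div_eq_mul_inv, le_div_iff₀ (by positivity)]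
  calc ‖t ^ p * g x‖ * (1 + t) ^ (N + 1) = t ^ p * ‖g x‖ * (1 + t) ^ (N + 1) := by
        rw [norm_mul, norm_pow, norm_norm]
    _ ≤ (1 + t) ^ p * Real.exp (β - α * t) * (1 + t) ^ (N + 1) := by
        gcongr
        · linarith
        · exact hle x
    _ = (1 + t) ^ q * Real.exp (β - α * t) := by ring
    _ ≤ q.factorial / α ^ q * Real.exp (α * (1 + t)) * Real.exp (β - α * t) := by
        gcongr; exact pow_le_factorial_div_pow_mul_exp q hα h1t.le
    _ = C := by rw [mul_assoc, hexp]; ring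

theorem Coercive.comp_isometry {k n : ℕ} {ρ : E n → EReal} (hρ : Coercive ρ) {φ : E k → E n}
    (hφ : Isometry φ) : Coercive (ρ ∘ φ) := by
  intro C
  obtain ⟨R, hR⟩ := hρ C
  refine ⟨R + ‖φ 0‖, fun x hx => hR _ ?_⟩
  have hdist := hφ.dist_eq x 0
  rw [dist_eq_norm, dist_eq_norm, sub_zero] at hdist
  linarith [norm_sub_le (φ x) (φ 0)]

theorem coe_add_div_le_of_convex_epigraph {F : Type*} [SeminormedAddCommGroup F]
    [NormedSpace ℝ F] {ψ : F → EReal} (hψ : Convex ℝ {p : F × ℝ | ψ p.1 ≤ p.2}) {x₀ : F}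
    {a R : ℝ} (hx₀ : ψ x₀ ≤ a) (hR : 0 < R)
    (hsphere : ∀ z, ‖z - x₀‖ = R → ((a + 1 : ℝ) : EReal) ≤ ψ z) {x : F}
    (hx : R ≤ ‖x - x₀‖) : ((a + ‖x - x₀‖ / R : ℝ) : EReal) ≤ ψ x := by
  set d := ‖x - x₀‖
  have hd : 0 < d := hR.trans_le hx
  set t := R / d with ht_def
  have ht : 0 < t := div_pos hR hd
  have ht1 : t ≤ 1 := (div_le_one hd).mpr hx
  have htd : t * d = R := by rw [ht_def]; field_simp
  refine EReal.le_of_forall_lt_iff_le.mp fun c hc => ?_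
  have hcomb : ψ ((1 - t) • x₀ + t • x) ≤ ((1 - t) * a + t * c : ℝ) := by
    have := hψ (show (x₀, a) ∈ _ from hx₀) (show (x, c) ∈ _ from hc.le)
      (sub_nonneg.mpr ht1) ht.le (sub_add_cancel 1 t)
    simpa only [Set.mem_ofPred_eq, Prod.smul_mk, Prod.mk_add_mk, smul_eq_mul] using this
  have hz : ‖((1 - t) • x₀ + t • x) - x₀‖ = R := by
    rw [show (1 - t) • x₀ + t • x - x₀ = t • (x - x₀) by module, norm_smul,
      Real.norm_of_nonneg ht.le, htd]
  have hslope : 1 ≤ t * (c - a) := by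
    have := EReal.coe_le_coe_iff.mp ((hsphere _ hz).trans hcomb)
    linarith
  have hdR : d / R * t = 1 := by rw [div_mul_eq_mul_div, mul_comm, htd, div_self hR.ne']
  rw [EReal.coe_le_coe_iff]
  nlinarith [mul_le_mul_of_nonneg_left hslope (div_nonneg hd.le hR.le)]

theorem ContinuousAffineMap.sub_norm_mul_le {F : Type*} [SeminormedAddCommGroup F]
    [NormedSpace ℝ F] (g : F →ᴬ[ℝ] ℝ) (x y : F) :
    g y - ‖g.contLinear‖ * ‖x - y‖ ≤ g x := by
  have h : g y - g x = g.contLinear (y - x) := (g.contLinear_map_vsub y x).symm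
  have := (Real.le_norm_self _).trans (g.contLinear.le_opNorm (y - x))
  rw [norm_sub_rev] at this
  linarith

section SupAffine

variable {F ι : Type*} [NormedAddCommGroup F] [NormedSpace ℝ F] (f : ι → F →ᴬ[ℝ] ℝ)

def supAffine (x : F) : EReal := ⨆ i, (f i x : EReal)

theorem le_supAffine (i : ι) (x : F) : (f i x : EReal) ≤ supAffine f x :=
  le_iSup (fun i => (f i x : EReal)) i

theorem supAffine_ne_bot [Nonempty ι] (x : F) : supAffine f x ≠ ⊥ :=
  ne_bot_of_le_ne_bot (EReal.coe_ne_bot _) (le_supAffine f (Classical.arbitrary ι) x)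

theorem supAffine_le_coe_iff {x : F} {c : ℝ} : supAffine f x ≤ c ↔ ∀ i, f i x ≤ c := by
  simp only [supAffine, iSup_le_iff, EReal.coe_le_coe_iff]

theorem lowerSemicontinuous_supAffine : LowerSemicontinuous (supAffine f) :=
  lowerSemicontinuous_iSup fun i =>
    (continuous_coe_real_ereal.comp (f i).continuous).lowerSemicontinuous

theorem convex_epigraph_supAffine : Convex ℝ {p : F × ℝ | supAffine f p.1 ≤ p.2} := by
  intro p hp q hq a b ha hb hab
  simp only [Set.mem_ofPred_eq, supAffine_le_coe_iff] at hp hq ⊢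
  intro i
  have hi : f i (a • p.1 + b • q.1) = a * f i p.1 + b * f i q.1 :=
    Convex.combo_affine_apply (f := (f i).toAffineMap) hab
  simp only [Prod.fst_add, Prod.smul_fst, Prod.snd_add, Prod.smul_snd, smul_eq_mul, hi]
  gcongr
  exacts [hp i, hq i]

end SupAffine

theorem exists_linear_lower_bound_supAffine {d : ℕ} {ι : Type*} [Nonempty ι]
    (f : ι → E d →ᴬ[ℝ] ℝ) (hf : Coercive (supAffine f)) :
    ∃ α > 0, ∃ β : ℝ, ∀ x, ((α * ‖x‖ - β : ℝ) : EReal) ≤ supAffine f x := by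
  by_cases htop : ∀ x, supAffine f x = ⊤
  · exact ⟨1, one_pos, 0, fun x => (htop x).symm ▸ le_top⟩
  push Not at htop
  obtain ⟨x₀, hx₀⟩ := htop
  obtain ⟨i₀⟩ := ‹Nonempty ι›
  set a := (supAffine f x₀).toReal
  have ha : supAffine f x₀ = a := (EReal.coe_toReal hx₀ (supAffine_ne_bot f x₀)).symm
  obtain ⟨R₀, hR₀⟩ := hf (a + 1)
  set R := max (R₀ + ‖x₀‖) 1
  have hR : 0 < R := lt_max_of_lt_right one_pos
  have hsphere : ∀ z, ‖z - x₀‖ = R → ((a + 1 : ℝ) : EReal) ≤ supAffine f z := by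
    refine fun z hz => hR₀ z ?_
    linarith [le_max_left (R₀ + ‖x₀‖) 1, norm_sub_le z x₀]
  set m := f i₀ x₀ - ‖(f i₀).contLinear‖ * R
  refine ⟨1 / R, by positivity, max (-a) (1 - m) + ‖x₀‖ / R, fun x => ?_⟩
  have hshift : 1 / R * ‖x‖ - ‖x₀‖ / R ≤ ‖x - x₀‖ / R := by
    rw [one_div_mul_eq_div, ← sub_div]; gcongr; exact norm_sub_norm_le x x₀
  rcases le_or_gt R ‖x - x₀‖ with hfar | hnear
  · refine le_trans (EReal.coe_le_coe_iff.mpr ?_)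
      (coe_add_div_le_of_convex_epigraph (convex_epigraph_supAffine f) ha.le hR hsphere hfar)
    linarith [le_max_left (-a) (1 - m)]
  · have hlow := (f i₀).sub_norm_mul_le x x₀
    have h1 : ‖x - x₀‖ / R < 1 := (div_lt_one hR).mpr hnear
    have h2 : ‖(f i₀).contLinear‖ * ‖x - x₀‖ ≤ ‖(f i₀).contLinear‖ * R := by gcongr
    refine (EReal.coe_le_coe_iff.mpr ?_).trans (le_supAffine f i₀ x)
    linarith [le_max_right (-a) (1 - m)]

/-- `exp (-e)` for `e : EReal`, with `exp (-⊤) = 0` (the value at `⊥` is junk). -/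
def EReal.expNeg (e : EReal) : ℝ := if e = ⊤ then 0 else Real.exp (-e.toReal)

theorem EReal.measurable_expNeg : Measurable EReal.expNeg :=
  Measurable.ite (measurableSet_singleton ⊤) measurable_const
    (Real.measurable_exp.comp measurable_ereal_toReal.neg)

theorem EReal.norm_expNeg_le {e : EReal} {r : ℝ} (h : (r : EReal) ≤ e) :
    ‖e.expNeg‖ ≤ Real.exp (-r) := by
  unfold EReal.expNeg
  split_ifs with htop
  · simp [Real.exp_nonneg]
  · rw [Real.norm_of_nonneg (Real.exp_nonneg _), Real.exp_le_exp]
    refine neg_le_neg ?_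
    simpa using EReal.toReal_le_toReal h (EReal.coe_ne_bot r) htop

section Theta

variable {m n : ℕ} (M : Matrix (Fin m) (Fin m) ℝ) (B : Matrix (Fin m) (Fin n) ℝ) (b : E m)

def thetaMinorant (u : E m) : E n →ᴬ[ℝ] ℝ :=
  ((innerSL ℝ u).comp (Matrix.toEuclideanLin B).toContinuousLinearMap).toContinuousAffineMap +
    ContinuousAffineMap.const ℝ (E n) (⟪u, b⟫ - 1 / 2 * ⟪u, mulVecE M u⟫)

theorem thetaMinorant_apply (u : E m) (y : E n) :
    thetaMinorant M B b u y = ⟪u, b + mulVecE B y⟫ - 1 / 2 * ⟪u, mulVecE M u⟫ := by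
  show ⟪u, mulVecE B y⟫ + (⟪u, b⟫ - 1 / 2 * ⟪u, mulVecE M u⟫) = _
  rw [inner_add_right]
  ring

theorem theta_add_mulVecE_eq_supAffine (U : Set (E m)) (y : E n) :
    theta U M (b + mulVecE B y) = supAffine (fun u : U => thetaMinorant M B b u) y := by
  simp only [theta, supAffine, thetaMinorant_apply]
  exact (iSup_subtype'' U _).symm

end Theta

theorem plq_moments_general {m n : ℕ}
    (U : Set (E m)) (hUne : U.Nonempty)
    (M : Matrix (Fin m) (Fin m) ℝ)
    (B : Matrix (Fin m) (Fin n) ℝ)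
    (b : E m)
    (ρ : E n → EReal) (hρ : ∀ y, ρ y = theta U M (b + mulVecE B y))
    (hcoer : Coercive ρ)
    (k : ℕ)
    (φ : E k →ᵃ[ℝ] E n) (hφiso : Isometry φ)
    (p : ℕ) :
    Integrable
      (fun x : E k =>
        ‖x‖ ^ p * (if ρ (φ x) = ⊤ then 0 else Real.exp (-(ρ (φ x)).toReal)))
      (volume : Measure (E k)) := by
  have : Nonempty U := hUne.to_subtype
  let f : U → E k →ᴬ[ℝ] ℝ := fun u => (thetaMinorant M B b u).comp ⟨φ, hφiso.continuous⟩
  have hρφ : ∀ x, ρ (φ x) = supAffine f x := fun x => by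
    rw [hρ, theta_add_mulVecE_eq_supAffine]; rfl
  have hcoer' : Coercive (supAffine f) := by
    simpa only [Function.comp_def, hρφ] using hcoer.comp_isometry hφiso
  obtain ⟨α, hα, β, hβ⟩ := exists_linear_lower_bound_supAffine f hcoer'
  show Integrable (fun x => ‖x‖ ^ p * (ρ (φ x)).expNeg) volume
  simp only [hρφ]
  refine integrable_norm_pow_mul_of_norm_le_exp volume p hα (β := β)
    (EReal.measurable_expNeg.comp (lowerSemicontinuous_supAffine f).measurable).aestronglyMeasurable
    fun x => ?_
  rw [← neg_sub]
  exact EReal.norm_expNeg_le (hβ x)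

/-- moments of all orders: if rho(y) = theta_{U,M}(b + B y) is coercive,
then for every nonnegative integer p the function x ↦ ‖x‖^p * exp(-rho(φ x))
(with exp(-infty) = 0) is integrable on ℝ^k, k = dim aff (dom rho), where φ is any
affine isometry of ℝ^k onto aff (dom rho). -/
theorem plq_moments {m n : ℕ}
    (U : Set (E m)) (hUne : U.Nonempty) (hUpoly : IsPolyhedral U)
    (M : Matrix (Fin m) (Fin m) ℝ) (hM : M.PosSemidef)
    (B : Matrix (Fin m) (Fin n) ℝ) (hB : Function.Injective (mulVecE B))
    (b : E m)
    (ρ : E n → EReal) (hρ : ∀ y, ρ y = theta U M (b + mulVecE B y))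
    (hcoer : Coercive ρ)
    (k : ℕ) (hk : k = Module.finrank ℝ (affineSpan ℝ {y | ρ y < ⊤}).direction)
    (φ : E k →ᵃ[ℝ] E n) (hφiso : Isometry φ)
    (hφrange : Set.range φ = (affineSpan ℝ {y | ρ y < ⊤} : Set (E n)))
    (p : ℕ) :
    Integrable
      (fun x : E k =>
        ‖x‖ ^ p * (if ρ (φ x) = ⊤ then 0 else Real.exp (-(ρ (φ x)).toReal)))
      (volume : Measure (E k)) :=
  plq_moments_general U hUne M B b ρ hρ hcoer k φ hφiso p
end
end

section
/- Let U ⊆ ℝ^m be a nonempty polyhedral set, M ∈ ℝ^{m×m} symmetric positive semidefinite, B ∈ ℝ^{m×n} injective, and b ∈ (U^∞ ∩ Null(M))° (so that θ_{U,M}(b) < ∞). Define ρ : ℝ^n → ℝ ∪ {+∞} by ρ(y) = θ_{U,M}(b + B y). Then ρ is coercive if and only if (Bᵀ cone(U))° = {0}. -/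
open Matrix Set MeasureTheory
open scoped RealInnerProductSpace

noncomputable section

/-!
If `v ≠ 0` lies in `(Bᵀ cone U)°`, then `⟪u, B (τ • v)⟫ ≤ 0` for all `u ∈ U` and `τ ≥ 0`, so along
the ray `τ • v` the penalty `ρ` stays below `sup_{u ∈ U} (⟪u, b⟫ - ½ ⟪u, M u⟫)`. This supremum is
finite: writing `U = {u | Aᵀ u ≤ a}`, Farkas' lemma turns `b ∈ (U^∞ ∩ Null M)°` into
`b = A t + M z` with `t ≥ 0`, and then `⟪u, b⟫ - ½ ⟪u, M u⟫ ≤ ⟪t, a⟫ + ½ ⟪z, M z⟫` on `U`.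
So coercivity forces the polar to be `{0}`.

Conversely, if the polar is `{0}`, every unit vector `d` admits some `u ∈ U` with `⟪Bᵀ u, d⟫ > 0`.
Compactness of the unit sphere makes this uniform, which yields `ρ y ≥ C + c ‖y‖` with `c > 0`.
-/

section InnerProductSpace

variable {F : Type*} [NormedAddCommGroup F] [InnerProductSpace ℝ F]

lemma inner_nonpos_of_mem_hull {s : Set F} {d : F} (hd : ∀ v ∈ s, ⟪v, d⟫ ≤ 0) {z : F}
    (hz : z ∈ PointedCone.hull ℝ s) : ⟪z, d⟫ ≤ 0 := by
  have hdual : -d ∈ PointedCone.dual (innerₗ F) (PointedCone.hull ℝ s) := by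
    rw [PointedCone.dual_hull]
    intro v hv
    simpa using hd v hv
  simpa using hdual hz

/-- The inductive step of Farkas' lemma. If `d` separates `x` from `s` but not from `w`, recurse on
the image under the projection `P` along `w` onto `d^⊥`; a direction `e` separating the projected
problem gives `e - (⟪w, e⟫ / ⟪w, d⟫) • d` for the original one. -/
lemma mem_hull_insert_or_exists_inner_pos {s : Set F} (w : F)
    (ih : ∀ (P : F →ₗ[ℝ] F) (y : F),
      y ∈ PointedCone.hull ℝ (P '' s) ∨ ∃ e, (∀ v ∈ P '' s, ⟪v, e⟫ ≤ 0) ∧ 0 < ⟪y, e⟫)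
    (x : F) :
    x ∈ PointedCone.hull ℝ (insert w s) ∨ ∃ d, (∀ v ∈ insert w s, ⟪v, d⟫ ≤ 0) ∧ 0 < ⟪x, d⟫ := by
  obtain hx | ⟨d, hd, hxd⟩ := ih LinearMap.id x
  · rw [LinearMap.id_coe, image_id] at hx
    exact .inl (Submodule.span_mono (subset_insert w s) hx)
  rw [LinearMap.id_coe, image_id] at hd
  by_cases hwd : ⟪w, d⟫ ≤ 0
  · exact .inr ⟨d, forall_mem_insert.2 ⟨hwd, hd⟩, hxd⟩
  set α := ⟪w, d⟫
  have hα : 0 < α := not_le.1 hwd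
  let P : F →ₗ[ℝ] F := LinearMap.id - α⁻¹ • (innerₗ F d).smulRight w
  have hP : ∀ y, P y = y - (α⁻¹ * ⟪y, d⟫) • w := fun y => by
    simp [P, mul_smul, real_inner_comm d y]
  have hPw : P w = 0 := by rw [hP, inv_mul_cancel₀ hα.ne', one_smul, sub_self]
  have hP_adjoint : ∀ y e, ⟪P y, e⟫ = ⟪y, e - (α⁻¹ * ⟪w, e⟫) • d⟫ := fun y e => by
    rw [hP, inner_sub_left, inner_sub_right, real_inner_smul_left, real_inner_smul_right]
    ring
  obtain hPx | ⟨e, he, hxe⟩ := ih P (P x)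
  · have hPx' : P x ∈ (PointedCone.hull ℝ s).map P := by
      rwa [PointedCone.map, Submodule.map_span]
    obtain ⟨z, hz, hPz⟩ := PointedCone.mem_map.1 hPx'
    have hxz : x = z + (α⁻¹ * ⟪x - z, d⟫) • w := by
      have h := hP (x - z)
      rw [map_sub, hPz, sub_self, eq_comm, sub_eq_zero] at h
      exact eq_add_of_sub_eq' h
    have hc : 0 ≤ α⁻¹ * ⟪x - z, d⟫ := by
      have := inner_nonpos_of_mem_hull hd hz
      rw [inner_sub_left]
      exact mul_nonneg (inv_nonneg.2 hα.le) (by linarith)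
    rw [hxz]
    exact .inl (add_mem (Submodule.span_mono (subset_insert w s) hz)
      (PointedCone.smul_mem _ hc (Submodule.subset_span (mem_insert w s))))
  · refine .inr ⟨e - (α⁻¹ * ⟪w, e⟫) • d, forall_mem_insert.2 ⟨?_, fun v hv => ?_⟩, ?_⟩
    · rw [← hP_adjoint, hPw, inner_zero_left]
    · exact hP_adjoint v e ▸ he (P v) (mem_image_of_mem P hv)
    · exact hP_adjoint x e ▸ hxe

lemma mem_hull_or_exists_inner_pos {s : Set F} (hs : s.Finite) (x : F) :
    x ∈ PointedCone.hull ℝ s ∨ ∃ d, (∀ v ∈ s, ⟪v, d⟫ ≤ 0) ∧ 0 < ⟪x, d⟫ := by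
  -- The inductive step recurses on a linear projection of `s`, hence the generalization.
  suffices h : ∀ (P : F →ₗ[ℝ] F) (y : F),
      y ∈ PointedCone.hull ℝ (P '' s) ∨ ∃ e, (∀ v ∈ P '' s, ⟪v, e⟫ ≤ 0) ∧ 0 < ⟪y, e⟫ by
    simpa using h LinearMap.id x
  induction s, hs using Set.Finite.induction_on with
  | empty =>
    intro P y
    by_cases hy : y = 0
    · exact .inl (by simp [hy])
    · exact .inr ⟨y, by simp, real_inner_self_pos.2 hy⟩
  | @insert w s _ _ ih =>
    intro P y
    rw [image_insert_eq]
    refine mem_hull_insert_or_exists_inner_pos (P w) (fun Q z => ?_) y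
    simpa only [image_image, LinearMap.coe_comp, Function.comp_def] using ih (Q ∘ₗ P) z

/-- **Farkas' lemma** for finitely many generators. -/
theorem mem_hull_of_forall_inner_nonpos {s : Set F} (hs : s.Finite) {x : F}
    (hx : ∀ d, (∀ v ∈ s, ⟪v, d⟫ ≤ 0) → ⟪x, d⟫ ≤ 0) : x ∈ PointedCone.hull ℝ s :=
  (mem_hull_or_exists_inner_pos hs x).resolve_right fun ⟨d, hd, hxd⟩ => (hx d hd).not_gt hxd

lemma exists_inner_le_of_mem_hull {U s : Set F} (hs : ∀ v ∈ s, ∃ K, ∀ u ∈ U, ⟪v, u⟫ ≤ K)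
    {g : F} (hg : g ∈ PointedCone.hull ℝ s) : ∃ K, ∀ u ∈ U, ⟪g, u⟫ ≤ K := by
  induction hg using Submodule.span_induction with
  | mem v hv => exact hs v hv
  | zero => exact ⟨0, fun u _ => by simp⟩
  | add v w _ _ hv hw =>
    obtain ⟨K, hK⟩ := hv
    obtain ⟨L, hL⟩ := hw
    exact ⟨K + L, fun u hu => by rw [inner_add_left]; exact add_le_add (hK u hu) (hL u hu)⟩
  | smul t v _ hv =>
    obtain ⟨K, hK⟩ := hv
    refine ⟨t * K, fun u hu => ?_⟩
    rw [← Nonneg.coe_smul, real_inner_smul_left]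
    exact mul_le_mul_of_nonneg_left (hK u hu) t.2

lemma LinearMap.IsPositive.inner_sub_half_inner_le {T : F →ₗ[ℝ] F} (hT : T.IsPositive) (u z : F) :
    ⟪u, T z⟫ - 1 / 2 * ⟪u, T u⟫ ≤ 1 / 2 * ⟪z, T z⟫ := by
  have hsymm : ⟪z, T u⟫ = ⟪u, T z⟫ := by rw [← hT.isSymmetric, real_inner_comm]
  have hnonneg := hT.inner_nonneg_right (u - z)
  rw [map_sub, inner_sub_left, inner_sub_right, inner_sub_right] at hnonneg
  linarith

lemma exists_forall_add_mul_norm_le [ProperSpace F] {ι : Type*} (f : ι → ℝ) (g : ι → F)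
    (hg : ∀ y ≠ 0, ∃ i, 0 < ⟪g i, y⟫) :
    ∃ C, ∃ c > 0, ∀ y ≠ 0, ∃ i, C + c * ‖y‖ ≤ f i + ⟪g i, y⟫ := by
  -- `O k` also demands `-k ≤ f i`, so the single level `k` given by compactness yields both `C`
  -- and `c`.
  let O : ℕ → Set F := fun k => ⋃ i ∈ {i | -(k : ℝ) ≤ f i}, {d | 1 / ((k : ℝ) + 1) < ⟪g i, d⟫}
  have hO_open : ∀ k, IsOpen (O k) := fun k =>
    isOpen_biUnion fun i _ => isOpen_lt continuous_const (continuous_const.inner continuous_id)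
  have hO_mono : Monotone O := by
    intro k l hkl d hd
    simp only [O, mem_iUnion₂, mem_ofPred_eq] at hd ⊢
    obtain ⟨i, hfi, hgi⟩ := hd
    have hkl' : (k : ℝ) ≤ l := Nat.cast_le.2 hkl
    exact ⟨i, by linarith, lt_of_le_of_lt (one_div_le_one_div_of_le (by positivity) (by linarith)) hgi⟩
  have hcover : Metric.sphere (0 : F) 1 ⊆ ⋃ k, O k := by
    intro d hd
    obtain ⟨i, hi⟩ := hg d (ne_zero_of_mem_unit_sphere ⟨d, hd⟩)
    obtain ⟨k₁, hk₁⟩ := exists_nat_one_div_lt hi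
    obtain ⟨k₂, hk₂⟩ := exists_nat_ge (-f i)
    refine mem_iUnion.2 ⟨k₁ + k₂, mem_iUnion₂.2 ⟨i, ?_, lt_of_le_of_lt ?_ hk₁⟩⟩
    · simp only [mem_ofPred_eq, Nat.cast_add]
      linarith [(Nat.cast_nonneg k₁ : (0 : ℝ) ≤ k₁)]
    · exact one_div_le_one_div_of_le (by positivity) (by simp)
  obtain ⟨k, hk⟩ := (isCompact_sphere (0 : F) 1).elim_directed_cover O hO_open hcover
    hO_mono.directed_le
  refine ⟨-k, 1 / ((k : ℝ) + 1), by positivity, fun y hy => ?_⟩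
  have hy' : 0 < ‖y‖ := norm_pos_iff.2 hy
  have hd : ‖y‖⁻¹ • y ∈ Metric.sphere (0 : F) 1 := by
    simp [norm_smul, hy'.ne']
  obtain ⟨i, hfi, hgi⟩ := mem_iUnion₂.1 (hk hd)
  refine ⟨i, ?_⟩
  rw [mem_ofPred_eq, real_inner_smul_right, lt_inv_mul_iff₀ hy'] at hgi
  linarith [hfi.out]

end InnerProductSpace

section EuclideanSpace

variable {m n : ℕ}

lemma inner_mulVecE_transpose_left (B : Matrix (Fin m) (Fin n) ℝ) (u : E m) (y : E n) :
    ⟪mulVecE Bᵀ u, y⟫ = ⟪u, mulVecE B y⟫ := by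
  rw [mulVecE, mulVecE, ← Matrix.conjTranspose_eq_transpose_of_trivial,
    Matrix.toEuclideanLin_conjTranspose_eq_adjoint, LinearMap.adjoint_inner_left]

lemma inner_mulVecE_single (A : Matrix (Fin m) (Fin n) ℝ) (i : Fin n) (u : E m) :
    ⟪mulVecE A (EuclideanSpace.single i 1), u⟫ = mulVecE Aᵀ u i := by
  rw [real_inner_comm, ← inner_mulVecE_transpose_left, real_inner_comm,
    EuclideanSpace.inner_single_left]
  simp

lemma Matrix.PosSemidef.inner_mulVecE_sub_half_le {M : Matrix (Fin m) (Fin m) ℝ}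
    (hM : M.PosSemidef) (u z : E m) :
    ⟪u, mulVecE M z⟫ - 1 / 2 * ⟪u, mulVecE M u⟫ ≤ 1 / 2 * ⟪z, mulVecE M z⟫ :=
  (Matrix.isPositive_toEuclideanLin_iff.2 hM).inner_sub_half_inner_le u z

lemma mem_horizonCone_of_mulVecE_nonpos {k : ℕ} {A : Matrix (Fin m) (Fin k) ℝ} {a : Fin k → ℝ}
    {d : E m} (hd : ∀ i, mulVecE Aᵀ d i ≤ 0) :
    d ∈ horizonCone {u | ∀ i, mulVecE Aᵀ u i ≤ a i} := by
  intro w hw τ hτ i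
  have hlin : mulVecE Aᵀ (w + τ • d) i = mulVecE Aᵀ w i + τ * mulVecE Aᵀ d i := by
    simp [mulVecE]
  rw [hlin]
  nlinarith [hw i, hd i]

lemma exists_eq_add_mulVecE_of_mem_polarCone {k : ℕ} {A : Matrix (Fin m) (Fin k) ℝ}
    {a : Fin k → ℝ} {M : Matrix (Fin m) (Fin m) ℝ} (hMt : Mᵀ = M) {b : E m}
    (hb : b ∈ polarCone (horizonCone {u | ∀ i, mulVecE Aᵀ u i ≤ a i} ∩ nullSet M)) :
    ∃ g ∈ PointedCone.hull ℝ (range fun i => mulVecE A (EuclideanSpace.single i 1)),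
      ∃ z, b = g + mulVecE M z := by
  set colA := range fun i => mulVecE A (EuclideanSpace.single i 1)
  set colM := range fun p => mulVecE M (EuclideanSpace.single p 1)
  set negColM := range fun p => -mulVecE M (EuclideanSpace.single p 1)
  have hb_hull : b ∈ PointedCone.hull ℝ (colA ∪ (colM ∪ negColM)) := by
    refine mem_hull_of_forall_inner_nonpos
      ((finite_range _).union ((finite_range _).union (finite_range _))) fun d hd => ?_
    refine hb d ⟨mem_horizonCone_of_mulVecE_nonpos fun i => ?_, ?_⟩
    · exact inner_mulVecE_single A i d ▸ hd _ (.inl (mem_range_self i))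
    · ext p
      have h₁ := hd _ (.inr (.inl (mem_range_self p)))
      have h₂ := hd _ (.inr (.inr (mem_range_self p)))
      rw [inner_mulVecE_single, hMt] at h₁
      rw [inner_neg_left, inner_mulVecE_single, hMt] at h₂
      simp only [PiLp.zero_apply]
      linarith
  have hrange : PointedCone.hull ℝ (colM ∪ negColM) ≤
      ((Matrix.toEuclideanLin M).range : PointedCone ℝ (E m)) := by
    refine Submodule.span_le.2 ?_
    rintro _ (⟨p, rfl⟩ | ⟨p, rfl⟩)
    · exact ⟨_, rfl⟩
    · exact ⟨-EuclideanSpace.single p 1, map_neg _ _⟩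
  unfold PointedCone.hull at hb_hull hrange
  rw [Submodule.span_union] at hb_hull
  obtain ⟨g, hg, h, hh, rfl⟩ := Submodule.mem_sup.1 hb_hull
  obtain ⟨z, rfl⟩ := hrange hh
  exact ⟨g, hg, z, rfl⟩

lemma exists_forall_inner_sub_half_le_of_mem_polarCone {U : Set (E m)} (hU : IsPolyhedral U)
    {M : Matrix (Fin m) (Fin m) ℝ} (hM : M.PosSemidef) {b : E m}
    (hb : b ∈ polarCone (horizonCone U ∩ nullSet M)) :
    ∃ K, ∀ u ∈ U, ⟪u, b⟫ - 1 / 2 * ⟪u, mulVecE M u⟫ ≤ K := by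
  obtain ⟨k, A, a, rfl⟩ := hU
  have hMt : Mᵀ = M := by
    simpa [Matrix.conjTranspose_eq_transpose_of_trivial] using hM.isHermitian.eq
  obtain ⟨g, hg, z, rfl⟩ := exists_eq_add_mulVecE_of_mem_polarCone hMt hb
  obtain ⟨K, hK⟩ : ∃ K, ∀ u ∈ {u | ∀ i, mulVecE Aᵀ u i ≤ a i}, ⟪g, u⟫ ≤ K := by
    refine exists_inner_le_of_mem_hull ?_ hg
    rintro _ ⟨i, rfl⟩
    exact ⟨a i, fun u hu => (inner_mulVecE_single A i u).symm ▸ hu i⟩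
  refine ⟨K + 1 / 2 * ⟪z, mulVecE M z⟫, fun u hu => ?_⟩
  have := hM.inner_mulVecE_sub_half_le u z
  rw [inner_add_right]
  linarith [hK u hu, real_inner_comm u g]

lemma zero_mem_polarCone {d : ℕ} (K : Set (E d)) : (0 : E d) ∈ polarCone K :=
  fun w _ => (inner_zero_left w).le

lemma mem_polarCone_image_transpose_iff {U : Set (E m)} {B : Matrix (Fin m) (Fin n) ℝ}
    {v : E n} : v ∈ polarCone (mulVecE Bᵀ '' coneOf U) ↔ ∀ u ∈ U, ⟪u, mulVecE B v⟫ ≤ 0 := by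
  constructor
  · intro hv u hu
    have := hv _ ⟨u, ⟨u, hu, 1, zero_le_one, (one_smul ℝ u).symm⟩, rfl⟩
    rwa [real_inner_comm, inner_mulVecE_transpose_left] at this
  · rintro hv _ ⟨_, ⟨u, hu, t, ht, rfl⟩, rfl⟩
    rw [real_inner_comm, inner_mulVecE_transpose_left, real_inner_smul_left]
    exact mul_nonpos_of_nonneg_of_nonpos ht (hv u hu)

lemma theta_add_le {U : Set (E m)} {M : Matrix (Fin m) (Fin m) ℝ} {b w : E m} {K : ℝ}
    (hK : ∀ u ∈ U, ⟪u, b⟫ - 1 / 2 * ⟪u, mulVecE M u⟫ ≤ K) (hw : ∀ u ∈ U, ⟪u, w⟫ ≤ 0) :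
    theta U M (b + w) ≤ K :=
  iSup₂_le fun u hu => EReal.coe_le_coe_iff.2 <| by
    rw [inner_add_right]
    linarith [hK u hu, hw u hu]

lemma Coercive.exists_smul_ge {ρ : E n → EReal} (hρ : Coercive ρ) {v : E n} (hv : v ≠ 0)
    (C : ℝ) : ∃ τ : ℝ, 0 ≤ τ ∧ (C : EReal) ≤ ρ (τ • v) := by
  obtain ⟨R, hR⟩ := hρ C
  refine ⟨|R| / ‖v‖, by positivity, hR _ ?_⟩
  rw [norm_smul, Real.norm_eq_abs, abs_div, abs_abs, abs_norm,
    div_mul_cancel₀ _ (norm_ne_zero_iff.2 hv)]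
  exact le_abs_self R

lemma eq_zero_of_mem_polarCone_of_coercive {U : Set (E m)} {M : Matrix (Fin m) (Fin m) ℝ}
    {B : Matrix (Fin m) (Fin n) ℝ} {b : E m} {K : ℝ}
    (hK : ∀ u ∈ U, ⟪u, b⟫ - 1 / 2 * ⟪u, mulVecE M u⟫ ≤ K)
    {ρ : E n → EReal} (hρ : ∀ y, ρ y = theta U M (b + mulVecE B y)) (hcoer : Coercive ρ)
    {v : E n} (hv : v ∈ polarCone (mulVecE Bᵀ '' coneOf U)) : v = 0 := by
  by_contra hv0
  obtain ⟨τ, hτ, hτv⟩ := hcoer.exists_smul_ge hv0 (K + 1)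
  have hle : ρ (τ • v) ≤ K := by
    rw [hρ]
    refine theta_add_le hK fun u hu => ?_
    rw [mulVecE, map_smul, real_inner_smul_right]
    exact mul_nonpos_of_nonneg_of_nonpos hτ (mem_polarCone_image_transpose_iff.1 hv u hu)
  have := EReal.coe_le_coe_iff.1 (hτv.trans hle)
  linarith

lemma coercive_of_polarCone_eq_zero {U : Set (E m)} {M : Matrix (Fin m) (Fin m) ℝ}
    {B : Matrix (Fin m) (Fin n) ℝ} {b : E m} {ρ : E n → EReal}
    (hρ : ∀ y, ρ y = theta U M (b + mulVecE B y))
    (hpolar : polarCone (mulVecE Bᵀ '' coneOf U) = {0}) : Coercive ρ := by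
  have hpos : ∀ y ≠ 0, ∃ u : U, 0 < ⟪mulVecE Bᵀ u, y⟫ := by
    intro y hy
    have hy' : y ∉ polarCone (mulVecE Bᵀ '' coneOf U) := hpolar ▸ hy
    rw [mem_polarCone_image_transpose_iff] at hy'
    push Not at hy'
    obtain ⟨u, hu, hpos⟩ := hy'
    exact ⟨⟨u, hu⟩, by rwa [inner_mulVecE_transpose_left]⟩
  obtain ⟨C, c, hc, hgrowth⟩ := exists_forall_add_mul_norm_le
    (fun u : U => ⟪(u : E m), b⟫ - 1 / 2 * ⟪(u : E m), mulVecE M u⟫) _ hpos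
  intro C'
  refine ⟨max 1 ((C' - C) / c), fun y hy => ?_⟩
  have hy0 : y ≠ 0 := norm_pos_iff.1 (lt_of_lt_of_le one_pos (le_of_max_le_left hy))
  obtain ⟨⟨u, hu⟩, hui⟩ := hgrowth y hy0
  have hC' : C' ≤ C + c * ‖y‖ := by
    have := (div_le_iff₀' hc).1 (le_of_max_le_right hy)
    linarith
  rw [hρ]
  refine le_iSup₂_of_le u hu (EReal.coe_le_coe_iff.2 ?_)
  rw [inner_add_right, ← inner_mulVecE_transpose_left]
  dsimp only at hui
  linarith

end EuclideanSpace

theorem coercivity_characterization_general {m n : ℕ}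
    (U : Set (E m)) (hUpoly : IsPolyhedral U)
    (M : Matrix (Fin m) (Fin m) ℝ) (hM : M.PosSemidef)
    (B : Matrix (Fin m) (Fin n) ℝ)
    (b : E m) (hb : b ∈ polarCone (horizonCone U ∩ nullSet M))
    (ρ : E n → EReal) (hρ : ∀ y, ρ y = theta U M (b + mulVecE B y)) :
    Coercive ρ ↔ polarCone (mulVecE Bᵀ '' coneOf U) = {0} := by
  obtain ⟨K, hK⟩ := exists_forall_inner_sub_half_le_of_mem_polarCone hUpoly hM hb
  refine ⟨fun hcoer => ?_, coercive_of_polarCone_eq_zero hρ⟩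
  exact eq_singleton_iff_unique_mem.2
    ⟨zero_mem_polarCone _, fun v hv => eq_zero_of_mem_polarCone_of_coercive hK hρ hcoer hv⟩

/-- coercivity of rho: with b ∈ (U^∞ ∩ Null M)_polar,
rho(y) = theta_{U,M}(b + B y) is coercive iff (Bᵀ cone U)_polar = {0}. -/
theorem coercivity_characterization {m n : ℕ}
    (U : Set (E m)) (hUne : U.Nonempty) (hUpoly : IsPolyhedral U)
    (M : Matrix (Fin m) (Fin m) ℝ) (hM : M.PosSemidef)
    (B : Matrix (Fin m) (Fin n) ℝ) (hB : Function.Injective (mulVecE B))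
    (b : E m) (hb : b ∈ polarCone (horizonCone U ∩ nullSet M))
    (ρ : E n → EReal) (hρ : ∀ y, ρ y = theta U M (b + mulVecE B y)) :
    Coercive ρ ↔ polarCone (mulVecE Bᵀ '' coneOf U) = {0} :=
  coercivity_characterization_general U hUpoly M hM B b hb ρ hρ
end
end
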